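/- arXiv:2301.01974 — 3 statements merged into one kernel-verified Lean document; each statement's English description precedes it below -/
import Mathlib

section
/- Let X be a real Banach space, let 𝒞 be a compatible class of bounded subsets of X, and let f ∈ S(X*). Suppose that for every β ≥ 0 and every closed convex C ∈ 𝒞 with inf f(closure(C + βB(X))) > 0, there exists a closed ball B[x₀, r₀] in X containing C + βB(X) with 0 ∉ B[x₀, r₀]. Then f is a strong 𝒞-semidenting point of B(X*). -/
/-!
Given `A ∈ 𝒞` with `A ⊆ B[0, M]` and `ε > 0`, pick `u ∈ B(X)` with `f u` close to `1`, let `W` be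
the closed absolutely convex hull of `A ∪ {u}` and `C = T • (u + W ∩ ker f)` for a large `T`.
Then `f = T f(u)` on `C`, so `f ≥ 1` on `C + β B(X)` with `β = T f(u) - 1`, and the hypothesis
yields a ball `B[x₀, r₀] ⊇ C + β B(X)` missing `0`. Every `g` in a thin w*-slice of `B(X*)` in
the direction of `x₀` exceeds `β - 1/2` on `C`; evaluating at `T u` and at `T (u ± k)` for
`k ∈ W ∩ ker f` shows that `g u` is within `O(1/T)` of `f u` and `|g| = O(1/T)` on
`W ∩ ker f`. Splitting `a ∈ A` as `(f a / f u) u` plus an element of `ker f` then gives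
`‖f - g‖_A = O(M / T) < ε`.
-/

open Metric Set Pointwise

variable {X : Type*} [NormedAddCommGroup X] [NormedSpace ℝ X]

/-- The seminorm `‖f‖_A = sup {|f x| : x ∈ A}` on the dual, for a bounded set `A ⊆ X`. -/
noncomputable def semiNormOn (A : Set X) (f : StrongDual ℝ X) : ℝ :=
  sSup ((fun x => |f x|) '' A)

/-- `B_A(f, ε) = {g ∈ X* : ‖f − g‖_A < ε}`. -/
def ballOn (A : Set X) (f : StrongDual ℝ X) (ε : ℝ) : Set (StrongDual ℝ X) :=
  {g | semiNormOn A (f - g) < ε}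

/-- `diam_A(B) = sup {‖f − g‖_A : f, g ∈ B}`. -/
noncomputable def diamOn (A : Set X) (B : Set (StrongDual ℝ X)) : ℝ :=
  sSup ((fun p : StrongDual ℝ X × StrongDual ℝ X =>
    semiNormOn A (p.1 - p.2)) '' (B ×ˢ B))

/-- The w*-slice `S(B(X*), x, δ) = {f ∈ B(X*) : f x > 1 − δ}`. -/
def wslice (x : X) (δ : ℝ) : Set (StrongDual ℝ X) :=
  {f | ‖f‖ ≤ 1 ∧ 1 - δ < f x}

/-- `D(x) = {f ∈ S(X*) : f x = 1}`. -/
def dualD (x : X) : Set (StrongDual ℝ X) :=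
  {f | ‖f‖ = 1 ∧ f x = 1}

/-- `D(E) = ⋃ {D(y) : y ∈ E}`. -/
def dualDSet (E : Set X) : Set (StrongDual ℝ X) :=
  ⋃ y ∈ E, dualD y

/-- `d1(C, x, δ) = sup {(‖x + λ y‖ + ‖x − λ y‖ − 2)/λ : 0 < λ < δ, y ∈ C}`. -/
noncomputable def d1 (C : Set X) (x : X) (δ : ℝ) : ℝ :=
  sSup {t | ∃ l : ℝ, ∃ y ∈ C, 0 < l ∧ l < δ ∧ t = (‖x + l • y‖ + ‖x - l • y‖ - 2) / l}

/-- `d2(C, x, δ) = diam_C (S(B(X*), x, δ))`. -/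
noncomputable def d2 (C : Set X) (x : X) (δ : ℝ) : ℝ :=
  diamOn C (wslice x δ)

/-- `d3(C, x, δ) = diam_C (D(S(X) ∩ B(x, δ)))`. -/
noncomputable def d3 (C : Set X) (x : X) (δ : ℝ) : ℝ :=
  diamOn C (dualDSet ({y | ‖y‖ = 1} ∩ ball x δ))

/-- `M_{ε, δ, C}(X)`. -/
noncomputable def Mset (ε δ : ℝ) (C : Set X) : Set X :=
  {x | ‖x‖ = 1 ∧
    sSup {t | ∃ y ∈ C, 0 < ‖y‖ ∧ ‖y‖ < δ ∧ t = (‖x + y‖ + ‖x - y‖ - 2) / ‖y‖} < ε}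

/-- `M_{ε, C}(X) = ⋃_{δ > 0} M_{ε, δ, C}(X)`. -/
noncomputable def MsetAll (ε : ℝ) (C : Set X) : Set X :=
  ⋃ δ > 0, Mset ε δ C

/-- A compatible class of bounded subsets of `X`. -/
structure IsCompatibleClass (𝒞 : Set (Set X)) : Prop where
  bounded : ∀ C ∈ 𝒞, Bornology.IsBounded C
  smul_add_mem : ∀ C ∈ 𝒞, ∀ (a : ℝ) (x : X), (fun y => a • y + x) '' C ∈ 𝒞
  union_singleton_mem : ∀ C ∈ 𝒞, ∀ x : X, C ∪ {x} ∈ 𝒞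
  closedAbsConvexHull_mem : ∀ C ∈ 𝒞, closure (absConvexHull ℝ C) ∈ 𝒞
  subset_mem : ∀ C ∈ 𝒞, ∀ A ⊆ C, A ∈ 𝒞
  union_mem : ∀ C₁ ∈ 𝒞, ∀ C₂ ∈ 𝒞, C₁ ∪ C₂ ∈ 𝒞

/-- `f ∈ S(X*)` is a strong `𝒞`-semidenting point of `B(X*)`. -/
def IsStrongSemidenting (𝒞 : Set (Set X)) (f : StrongDual ℝ X) : Prop :=
  ∀ A ∈ 𝒞, ∀ ε : ℝ, 0 < ε → ∃ x : X, ‖x‖ = 1 ∧ ∃ δ : ℝ, 0 < δ ∧ δ < 1 ∧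
    wslice x δ ⊆ ballOn A f ε

/-- A set is the intersection of the closed balls containing it. -/
def IsBallIntersection (D : Set X) : Prop :=
  D = ⋂₀ {B : Set X | (∃ z : X, ∃ r : ℝ, 0 < r ∧ B = closedBall z r) ∧ D ⊆ B}

/-- `X` has the strong `𝒞`-MIP. -/
def HasStrongCMIP (𝒞 : Set (Set X)) : Prop :=
  ∀ C ∈ 𝒞, IsClosed C → Convex ℝ C → ∀ β : ℝ, 0 ≤ β →
    IsBallIntersection (closure (C + closedBall (0 : X) β))

/-- A support mapping: a selection of the duality map `D`. -/
def IsSupportMapping (φ : X → StrongDual ℝ X) : Prop :=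
  ∀ x : X, ‖x‖ = 1 → φ x ∈ dualD x

/-- The duality map on `X` is norm-`τ` quasicontinuous. -/
def DualityMapQuasicontinuous (𝒞 : Set (Set X)) : Prop :=
  ∀ f : StrongDual ℝ X, ‖f‖ = 1 → ∀ ε : ℝ, 0 < ε → ∀ C ∈ 𝒞,
    ∃ δ : ℝ, 0 < δ ∧ ∃ x : X, ‖x‖ = 1 ∧
      dualDSet ({y | ‖y‖ = 1} ∩ ball x δ) ⊆ ballOn C f ε

/-- `cone(A) = {λ a : λ ≥ 0, a ∈ A}`. -/
def coneOf (A : Set (StrongDual ℝ X)) : Set (StrongDual ℝ X) :=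
  {g | ∃ l : ℝ, 0 ≤ l ∧ ∃ a ∈ A, g = l • a}

/-- `X` has the `𝒞`-UMIP. -/
def HasCUMIP (𝒞 : Set (Set X)) : Prop :=
  ∀ ε : ℝ, 0 < ε → ∀ M : ℝ, 2 ≤ M → ∃ K : ℝ, 0 < K ∧ ∃ η : ℝ, 0 < η ∧ η ≤ ε ∧
    ∀ C ∈ 𝒞, IsClosed C → Convex ℝ C → Metric.diam C ≤ M → ε ≤ Metric.infDist 0 C →
      ∃ z₀ : X, ∃ r : ℝ, 0 < r ∧ r ≤ K ∧ C ⊆ closedBall z₀ r ∧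
        η ≤ Metric.infDist 0 (closedBall z₀ r)

lemma apply_le_norm_of_norm_le_one {g : StrongDual ℝ X} (hg : ‖g‖ ≤ 1) (y : X) : g y ≤ ‖y‖ :=
  (Real.le_norm_self _).trans ((g.le_of_opNorm_le hg y).trans_eq (one_mul _))

lemma exists_norm_lt_one_lt_apply (f : StrongDual ℝ X) {r : ℝ} (hr : r < ‖f‖) :
    ∃ u : X, ‖u‖ < 1 ∧ r < f u := by
  obtain ⟨x, hx, hfx⟩ := f.exists_lt_apply_of_lt_opNorm hr
  rcases le_or_gt 0 (f x) with hpos | hneg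
  · exact ⟨x, hx, by rwa [Real.norm_of_nonneg hpos] at hfx⟩
  · refine ⟨-x, by rwa [norm_neg], ?_⟩
    rw [Real.norm_of_nonpos hneg.le] at hfx
    simpa using hfx

lemma semiNormOn_le {A : Set X} {f : StrongDual ℝ X} {c : ℝ} (hc : 0 ≤ c)
    (h : ∀ a ∈ A, |f a| ≤ c) : semiNormOn A f ≤ c :=
  Real.sSup_le (by rintro _ ⟨a, ha, rfl⟩; exact h a ha) hc

lemma IsClosed.image_smul_add {K : Set X} (hK : IsClosed K) {γ : ℝ} (hγ : γ ≠ 0) (v : X) :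
    IsClosed ((fun y => γ • y + v) '' K) :=
  ((Homeomorph.smulOfNeZero γ hγ).trans (Homeomorph.addRight v)).isClosedMap K hK

lemma Convex.image_smul_add {K : Set X} (hK : Convex ℝ K) (γ : ℝ) (v : X) :
    Convex ℝ ((fun y => γ • y + v) '' K) := by
  simpa only [add_comm] using hK.affinity v γ

lemma add_dist_le_of_closedBall_subset [Nontrivial X] {c x : X} {β r : ℝ} (hβ : 0 ≤ β)
    (h : closedBall c β ⊆ closedBall x r) : β + dist c x ≤ r := by
  obtain ⟨v, hv, hcx⟩ : ∃ v : X, ‖v‖ = 1 ∧ ‖c - x‖ • v = c - x := by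
    rcases eq_or_ne c x with rfl | hne
    · obtain ⟨v, hv⟩ := exists_norm_eq X zero_le_one
      exact ⟨v, hv, by simp⟩
    · have hne' : c - x ≠ 0 := sub_ne_zero.2 hne
      exact ⟨‖c - x‖⁻¹ • (c - x), norm_smul_inv_norm hne',
        smul_inv_smul₀ (norm_ne_zero_iff.2 hne') _⟩
  have hmem : c + β • v ∈ closedBall c β := by
    rw [mem_closedBall, dist_eq_norm, add_sub_cancel_left, norm_smul, hv,
      Real.norm_of_nonneg hβ, mul_one]
  have hdist := h hmem
  rwa [mem_closedBall, dist_eq_norm, show c + β • v - x = (‖c - x‖ + β) • v by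
    rw [add_smul, hcx]; abel, norm_smul, hv, mul_one, Real.norm_of_nonneg (by positivity),
    ← dist_eq_norm, add_comm] at hdist

lemma exists_wslice_forall_lt_apply {C : Set X} (hC : C.Nonempty) {β η r₀ : ℝ} (hβ : 0 ≤ β)
    (hη : 0 < η) {x₀ : X} (hsub : C + closedBall 0 β ⊆ closedBall x₀ r₀)
    (h0 : (0 : X) ∉ closedBall x₀ r₀) :
    ∃ x : X, ‖x‖ = 1 ∧ ∃ δ : ℝ, 0 < δ ∧ δ < 1 ∧ ∀ g ∈ wslice x δ, ∀ c ∈ C, β - η < g c := by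
  obtain ⟨c₀, hc₀⟩ := hC
  have hr₀ : r₀ < ‖x₀‖ := by simpa [mem_closedBall, dist_zero_left] using h0
  have hr₀0 : 0 ≤ r₀ := dist_nonneg.trans (hsub (add_mem_add hc₀ (mem_closedBall_self hβ)))
  have hx₀ : 0 < ‖x₀‖ := hr₀0.trans_lt hr₀
  have : Nontrivial X := nontrivial_of_ne x₀ 0 (norm_pos_iff.1 hx₀)
  refine ⟨‖x₀‖⁻¹ • x₀, norm_smul_inv_norm (norm_pos_iff.1 hx₀), min (1 / 2) (η / ‖x₀‖),
    by positivity, (min_le_left _ _).trans_lt (by norm_num), ?_⟩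
  rintro g ⟨hg, hgx⟩ c hc
  have hdist : β + dist c x₀ ≤ r₀ := by
    refine add_dist_le_of_closedBall_subset hβ (subset_trans ?_ hsub)
    rw [← singleton_add_closedBall_zero]
    exact add_subset_add_right (singleton_subset_iff.2 hc)
  have hgx₀ : ‖x₀‖ - η < g x₀ := by
    have hδ : min (1 / 2) (η / ‖x₀‖) * ‖x₀‖ ≤ η :=
      (mul_le_mul_of_nonneg_right (min_le_right _ _) hx₀.le).trans_eq (div_mul_cancel₀ _ hx₀.ne')
    rw [map_smul, smul_eq_mul, lt_inv_mul_iff₀ hx₀] at hgx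
    linarith
  have hgc : g x₀ - dist c x₀ ≤ g c := by
    have := apply_le_norm_of_norm_le_one hg (x₀ - c)
    rw [map_sub, ← dist_eq_norm, dist_comm] at this
    linarith
  linarith

lemma le_sInf_image_closure_add_closedBall {f : StrongDual ℝ X} (hf : ‖f‖ ≤ 1) {C : Set X}
    (hC : C.Nonempty) {β m : ℝ} (hβ : 0 ≤ β) (hfC : ∀ c ∈ C, β + m ≤ f c) :
    m ≤ sInf (f '' closure (C + closedBall 0 β)) := by
  have hsub : closure (C + closedBall (0 : X) β) ⊆ {z | m ≤ f z} := by
    refine closure_minimal ?_ (isClosed_le continuous_const f.continuous)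
    rintro _ ⟨c, hc, b, hb, rfl⟩
    have hfb := apply_le_norm_of_norm_le_one hf (-b)
    rw [map_neg, norm_neg] at hfb
    have hb' : ‖b‖ ≤ β := mem_closedBall_zero_iff.1 hb
    change m ≤ f (c + b)
    rw [map_add]
    linarith [hfC c hc]
  obtain ⟨c, hc⟩ := hC
  have hne : (closure (C + closedBall (0 : X) β)).Nonempty :=
    ⟨c + 0, subset_closure (add_mem_add hc (mem_closedBall_self hβ))⟩
  exact le_csInf (hne.image f) (forall_mem_image.2 hsub)

section Slab

-- The slab is `T • (u + W ∩ ker f)`, on which `f` is constantly `T * f u`.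

variable {f g : StrongDual ℝ X} {W : Set X} {u : X} {T : ℝ}

lemma abs_sub_apply_base_le_of_forall_lt_slab (hT : 0 < T) (hW : (0 : X) ∈ W) (hgu : g u ≤ 1)
    (hfu : T * (1 - f u) ≤ 1 / 2)
    (hg : ∀ y ∈ W, f y = 0 → T * f u - 3 / 2 < g (T • y + T • u)) :
    |f u - g u| ≤ 3 / (2 * T) := by
  have h0 := hg 0 hW (map_zero f)
  simp only [smul_zero, zero_add, map_smul, smul_eq_mul] at h0
  rw [abs_sub_le_iff, le_div_iff₀ (by positivity), le_div_iff₀ (by positivity)]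
  constructor <;> nlinarith

lemma abs_apply_le_on_ker_of_forall_lt_slab (hT : 0 < T) (hW : Balanced ℝ W) (hgu : g u ≤ 1)
    (hfu : T * (1 - f u) ≤ 1 / 2)
    (hg : ∀ y ∈ W, f y = 0 → T * f u - 3 / 2 < g (T • y + T • u)) :
    ∀ y ∈ W, f y = 0 → |g y| ≤ 2 / T := by
  intro y hy hfy
  have h₁ := hg y hy hfy
  have h₂ := hg (-y) (hW.neg_mem_iff.2 hy) (by rw [map_neg, hfy, neg_zero])
  simp only [map_add, map_smul, map_neg, smul_eq_mul] at h₁ h₂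
  rw [le_div_iff₀ hT, ← abs_of_pos hT, ← abs_mul, abs_le]
  constructor <;> nlinarith

lemma abs_sub_apply_le_of_abs_apply_le_on_ker (hW : AbsConvex ℝ W) {a : X} (hu : u ∈ W)
    (ha : a ∈ W) {s κ τ : ℝ} (hs : 0 < s)
    (hfu : 0 < f u) (hfa : |f a| ≤ s * f u) (hgW : ∀ y ∈ W, f y = 0 → |g y| ≤ κ)
    (hτ : |f u - g u| ≤ τ) :
    |f a - g a| ≤ s * τ + (1 + s) * κ := by
  set t := f a / f u
  have ht : |t| ≤ s := by rwa [abs_div, abs_of_pos hfu, div_le_iff₀ hfu]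
  have hw : (1 + s)⁻¹ • (a - t • u) ∈ W := by
    have hu' : (-t / s) • u ∈ W := hW.1.smul_mem (by
      rw [Real.norm_eq_abs, abs_div, abs_neg, abs_of_pos hs]; exact div_le_one_of_le₀ ht hs.le) hu
    convert hW.2 ha hu' (by positivity : 0 ≤ (1 + s)⁻¹) (by positivity : 0 ≤ s / (1 + s))
      (by field_simp) using 1
    rw [smul_smul, show s / (1 + s) * (-t / s) = -t * (1 + s)⁻¹ by field_simp]
    module
  have hfw : f ((1 + s)⁻¹ • (a - t • u)) = 0 := by
    simp [t, div_mul_cancel₀ _ hfu.ne']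
  have hgw : |g (a - t • u)| ≤ (1 + s) * κ := by
    have := hgW _ hw hfw
    rwa [map_smul, smul_eq_mul, abs_mul, abs_inv, abs_of_pos (by positivity : 0 < 1 + s),
      inv_mul_le_iff₀ (by positivity)] at this
  calc |f a - g a| = |t * (f u - g u) - g (a - t • u)| := by
        congr 1; simp only [map_sub, map_smul, smul_eq_mul, t]; field_simp; ring
    _ ≤ |t| * |f u - g u| + |g (a - t • u)| := (abs_sub _ _).trans_eq (by rw [abs_mul])
    _ ≤ s * τ + (1 + s) * κ := by gcongr

lemma abs_sub_apply_le_of_forall_lt_slab (hW : AbsConvex ℝ W) (hf : ‖f‖ ≤ 1) (hg₁ : ‖g‖ ≤ 1)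
    {a : X} (hu : u ∈ W) (hu₁ : ‖u‖ ≤ 1) (ha : a ∈ W) {M : ℝ} (hT : 2 ≤ T) (hM : 0 < M) (haM : ‖a‖ ≤ M)
    (hfu : T * (1 - f u) ≤ 1 / 2)
    (hg : ∀ y ∈ W, f y = 0 → T * f u - 3 / 2 < g (T • y + T • u)) :
    |f a - g a| ≤ (7 * M + 2) / T := by
  have hgu : g u ≤ 1 := (apply_le_norm_of_norm_le_one hg₁ u).trans hu₁
  have hfa : |f a| ≤ 2 * M * f u := by
    rw [← Real.norm_eq_abs]
    nlinarith [f.le_of_opNorm_le hf a]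
  calc |f a - g a| ≤ 2 * M * (3 / (2 * T)) + (1 + 2 * M) * (2 / T) :=
        abs_sub_apply_le_of_abs_apply_le_on_ker hW hu ha (by positivity) (by nlinarith) hfa
          (abs_apply_le_on_ker_of_forall_lt_slab (by positivity) hW.1 hgu hfu hg)
          (abs_sub_apply_base_le_of_forall_lt_slab (by positivity) (hW.1.zero_mem ⟨u, hu⟩) hgu hfu hg)
    _ = (7 * M + 2) / T := by field_simp; ring

end Slab

theorem stmt5_general (𝒞 : Set (Set X)) (h𝒞 : IsCompatibleClass 𝒞)
    (f : StrongDual ℝ X) (hf : ‖f‖ = 1)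
    (h : ∀ β : ℝ, 0 ≤ β → ∀ C ∈ 𝒞, IsClosed C → Convex ℝ C →
      0 < sInf (f '' closure (C + closedBall (0 : X) β)) →
      ∃ x₀ : X, ∃ r₀ : ℝ, C + closedBall (0 : X) β ⊆ closedBall x₀ r₀ ∧
        (0 : X) ∉ closedBall x₀ r₀) :
    IsStrongSemidenting 𝒞 f := by
  intro A hA ε hε
  obtain ⟨M, hM, hAM⟩ := (h𝒞.bounded A hA).exists_pos_norm_le
  -- the errors at `u` and on `ker f` found below add up to `(7 * M + 2) / T`
  set T := (7 * M + 2) / ε + 2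
  have hT : 2 ≤ T := le_add_of_nonneg_left (by positivity)
  obtain ⟨u, hu, hfu⟩ := exists_norm_lt_one_lt_apply f (r := 1 - 1 / (2 * T))
    (by rw [hf]; linarith [show 0 < 1 / (2 * T) by positivity])
  have hTfu : T * (1 - f u) ≤ 1 / 2 := by
    rw [sub_lt_comm, lt_div_iff₀ (by positivity)] at hfu
    linarith
  set W := closure (absConvexHull ℝ (A ∪ {u}))
  have hW : AbsConvex ℝ W := absConvex_absConvexHull.closure
  have huW : u ∈ W := subset_closure (subset_absConvexHull (Or.inr rfl))
  set K := W ∩ {y | f y = 0}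
  set C := (fun y => T • y + T • u) '' K
  have hC : C.Nonempty := ⟨_, mem_image_of_mem _ ⟨hW.1.zero_mem ⟨u, huW⟩, map_zero f⟩⟩
  have hC𝒞 : C ∈ 𝒞 := h𝒞.smul_add_mem K (h𝒞.subset_mem _ (h𝒞.closedAbsConvexHull_mem _
    (h𝒞.union_singleton_mem A hA u)) K inter_subset_left) T (T • u)
  have hfC : ∀ c ∈ C, T * f u - 1 + 1 ≤ f c := by
    rintro _ ⟨k, ⟨-, hk : f k = 0⟩, rfl⟩
    simp [hk]
  have hβ : 0 ≤ T * f u - 1 := by nlinarith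
  obtain ⟨x₀, r₀, hsub, h0⟩ := h _ hβ C hC𝒞
    ((isClosed_closure.inter (isClosed_eq f.continuous continuous_const)).image_smul_add
      (by positivity) _)
    ((hW.2.inter (convex_hyperplane f.isLinear 0)).image_smul_add _ _)
    (one_pos.trans_le (le_sInf_image_closure_add_closedBall hf.le hC hβ hfC))
  obtain ⟨x, hx, δ, hδ, hδ1, hslice⟩ := exists_wslice_forall_lt_apply hC hβ one_half_pos hsub h0
  refine ⟨x, hx, δ, hδ, hδ1, fun g hg => ?_⟩
  have hgW : ∀ y ∈ W, f y = 0 → T * f u - 3 / 2 < g (T • y + T • u) := fun y hy hfy => by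
    linarith [hslice g hg _ ⟨y, ⟨hy, hfy⟩, rfl⟩]
  refine (semiNormOn_le (by positivity) fun a ha => abs_sub_apply_le_of_forall_lt_slab hW hf.le
    hg.1 huW hu.le (subset_closure (subset_absConvexHull (Or.inl ha))) hT hM (hAM a ha) hTfu
    hgW).trans_lt ?_
  rw [div_lt_iff₀ (by positivity)]
  simp only [T]; field_simp; linarith

theorem stmt5 [CompleteSpace X] (𝒞 : Set (Set X)) (h𝒞 : IsCompatibleClass 𝒞)
    (f : StrongDual ℝ X) (hf : ‖f‖ = 1)
    (h : ∀ β : ℝ, 0 ≤ β → ∀ C ∈ 𝒞, IsClosed C → Convex ℝ C →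
      0 < sInf (f '' closure (C + closedBall (0 : X) β)) →
      ∃ x₀ : X, ∃ r₀ : ℝ, C + closedBall (0 : X) β ⊆ closedBall x₀ r₀ ∧
        (0 : X) ∉ closedBall x₀ r₀) :
    IsStrongSemidenting 𝒞 f :=
  stmt5_general 𝒞 h𝒞 f hf h
end

section
/- Let X be a real Banach space and let 𝒞 be a compatible class of bounded subsets of X. Suppose that for every ε > 0 there exists δ > 0 such that for every C ∈ 𝒞 with C ⊆ B(X) and every f ∈ S(X*) there is x ∈ S(X) with S(B(X*), x, δ) ⊆ B_C(f, ε). Then for every ε > 0, every β ≥ 0, every M ≥ 2 and every 0 < η < ε, there exists K > 0 such that for every closed convex C ∈ 𝒞 with diam(C) ≤ M and dist(0, C + βB(X)) ≥ ε, there exist z₀ ∈ X and 0 < r ≤ K such that C + βB(X) ⊆ B[z₀, r] and dist(0, B[z₀, r]) > η. -/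
/-!
Put `D = C + βB(X)` and `R = η + M + β`. If `C` has a point `c₀` with `‖c₀‖ > R`, then `D` lies in
`B[c₀, M + β]`, which is at distance `> η` from `0`. Otherwise `C ⊆ R·B(X)`, and since
`dist(0, C) ≥ ε + β`, Hahn–Banach gives `f ∈ S(X*)` with `f ≥ ε + β` on `C`. The hypothesis, applied
to `C / R ∈ 𝒞`, gives `x ∈ S(X)` such that every `g` in the slice `S(B(X*), x, δ)` is
`(ε - η)/2`-close to `f` on `C`. For `c ∈ C`, a norming functional `g` of `t x - c` either lies
outside the slice, so that `‖t x - c‖ ≤ t(1 - δ) + R`, or lies in it, so that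
`‖t x - c‖ = t g(x) - g(c) ≤ t - f(c) + (ε - η)/2`. For `t` large, fixed in terms of `δ` only, both
bounds are at most `t - (ε + η)/2 - β`, so `D ⊆ B[t x, t - (ε + η)/2]`, a ball at distance
`(ε + η)/2 > η` from `0`.
-/

open Metric Set Pointwise

variable {X : Type*} [NormedAddCommGroup X] [NormedSpace ℝ X]

theorem abs_apply_le_semiNormOn {A : Set X} (hA : Bornology.IsBounded A) (f : StrongDual ℝ X)
    {a : X} (ha : a ∈ A) : |f a| ≤ semiNormOn A f := by
  obtain ⟨r, hr⟩ := hA.subset_closedBall 0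
  refine le_csSup ⟨‖f‖ * r, ?_⟩ (mem_image_of_mem _ ha)
  rintro _ ⟨y, hy, rfl⟩
  exact (f.le_opNorm y).trans
    (mul_le_mul_of_nonneg_left (mem_closedBall_zero_iff.1 (hr hy)) (norm_nonneg f))

theorem image_inv_smul_subset_closedBall_one {C : Set X} {R : ℝ} (hR : 0 < R)
    (hCR : C ⊆ closedBall 0 R) : (fun y => R⁻¹ • y + 0) '' C ⊆ closedBall (0 : X) 1 := by
  rintro _ ⟨c, hc, rfl⟩
  simp only [mem_closedBall_zero_iff, add_zero, norm_smul, norm_inv, Real.norm_of_nonneg hR.le,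
    inv_mul_le_one₀ hR]
  exact mem_closedBall_zero_iff.1 (hCR hc)

theorem abs_sub_apply_lt_of_wslice_subset_ballOn {C : Set X} {R ε δ : ℝ}
    {f g : StrongDual ℝ X} {x c : X} (hR : 0 < R) (hCR : C ⊆ closedBall 0 R)
    (hxf : wslice x δ ⊆ ballOn ((fun y => R⁻¹ • y + 0) '' C) f ε) (hg : g ∈ wslice x δ)
    (hc : c ∈ C) : |f c - g c| < ε * R := by
  have hle := abs_apply_le_semiNormOn
    ((isBounded_closedBall).subset (image_inv_smul_subset_closedBall_one hR hCR)) (f - g)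
    (mem_image_of_mem (fun y => R⁻¹ • y + 0) hc)
  have hval : (f - g) (R⁻¹ • c + 0) = R⁻¹ * (f c - g c) := by simp [mul_sub]
  rw [hval, abs_mul, abs_of_pos (inv_pos.2 hR)] at hle
  rw [mul_comm, ← inv_mul_lt_iff₀ hR]
  exact hle.trans_lt (hxf hg)

theorem norm_smul_sub_le_max {f : StrongDual ℝ X} {x c : X} {t δ κ R : ℝ} (hx : ‖x‖ = 1)
    (ht : 0 ≤ t) (hc : ‖c‖ ≤ R) (hclose : ∀ g ∈ wslice x δ, |f c - g c| < κ) :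
    ‖t • x - c‖ ≤ max (t * (1 - δ) + R) (t - f c + κ) := by
  obtain ⟨g, hg, hgv⟩ := exists_dual_vector'' ℝ (t • x - c)
  have hnorm : ‖t • x - c‖ = t * g x - g c := by simpa using hgv.symm
  have hgc : -R ≤ g c := by
    have := (g.le_opNorm c).trans (mul_le_of_le_one_left (norm_nonneg c) hg)
    linarith [neg_abs_le (g c), Real.norm_eq_abs (g c)]
  have hgx : g x ≤ 1 := by
    have := (g.le_opNorm x).trans (mul_le_of_le_one_left (norm_nonneg x) hg)
    rw [hx, Real.norm_eq_abs] at this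
    exact (le_abs_self _).trans this
  rw [hnorm]
  by_cases hslice : 1 - δ < g x
  · have := (abs_lt.1 (hclose g ⟨hg, hslice⟩)).2
    nlinarith [mul_le_mul_of_nonneg_left hgx ht, le_max_right (t * (1 - δ) + R) (t - f c + κ)]
  · nlinarith [mul_le_mul_of_nonneg_left (not_lt.1 hslice) ht,
      le_max_left (t * (1 - δ) + R) (t - f c + κ)]

theorem exists_norm_eq_one_forall_le_apply {s : Set X} {a : ℝ} (hs : Convex ℝ s)
    (hne : s.Nonempty) (ha : 0 < a) (hsa : ∀ y ∈ s, a ≤ ‖y‖) :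
    ∃ f : StrongDual ℝ X, ‖f‖ = 1 ∧ ∀ y ∈ s, a ≤ f y := by
  have hdisj : Disjoint (ball (0 : X) a) s :=
    disjoint_left.2 fun y hy hys => (mem_ball_zero_iff.1 hy).not_ge (hsa y hys)
  obtain ⟨f, u, hball, hsu⟩ := geometric_hahn_banach_open (convex_ball 0 a) isOpen_ball hs hdisj
  have hclosedBall : ∀ z ∈ closedBall (0 : X) a, f z ≤ u := by
    rw [← closure_ball 0 ha.ne']
    exact fun z hz => closure_minimal (fun w hw => (hball w hw).le)
      (isClosed_le f.continuous continuous_const) hz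
  have hnorm : ‖f‖ ≤ u / a := f.opNorm_bound_of_ball_bound ha u fun z hz => by
    have := hclosedBall (-z) (by simpa using hz)
    rw [map_neg] at this
    exact abs_le.2 ⟨by linarith, hclosedBall z hz⟩
  obtain ⟨y₀, hy₀⟩ := hne
  have hu : 0 < u := by simpa using hball 0 (mem_ball_self ha)
  have hf : 0 < ‖f‖ := norm_pos_iff.2 fun h0 => by
    have := hsu y₀ hy₀
    simp [h0] at this
    linarith
  refine ⟨‖f‖⁻¹ • f, by rw [norm_smul, norm_inv, norm_norm, inv_mul_cancel₀ hf.ne'],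
    fun y hy => ?_⟩
  rw [smul_apply, smul_eq_mul, le_inv_mul_iff₀ hf]
  calc ‖f‖ * a ≤ u := by rwa [le_div_iff₀ ha] at hnorm
    _ ≤ f y := hsu y hy

theorem add_le_norm_of_le_infDist_add_closedBall {C : Set X} {ε β : ℝ} {c : X} (hε : 0 < ε)
    (hβ : 0 ≤ β) (h : ε ≤ infDist 0 (C + closedBall 0 β)) (hc : c ∈ C) : ε + β ≤ ‖c‖ := by
  by_contra! hlt
  obtain ⟨y, hy, hyc⟩ := exists_dist_lt_le hε hβ
    (by rwa [dist_zero_left, add_comm] : dist (0 : X) c < β + ε)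
  have hmem : y ∈ C + closedBall 0 β :=
    ⟨c, hc, y - c, by rwa [mem_closedBall_zero_iff, ← dist_eq_norm], add_sub_cancel c y⟩
  exact (h.trans (infDist_le_dist_of_mem hmem)).not_gt hy

theorem add_closedBall_zero_subset_closedBall {E : Type*} [SeminormedAddCommGroup E] {C : Set E}
    {z : E} {ρ β : ℝ} (hC : C ⊆ closedBall z ρ) : C + closedBall 0 β ⊆ closedBall z (ρ + β) := by
  rintro _ ⟨c, hc, b, hb, rfl⟩
  have hcz := mem_closedBall.1 (hC hc)
  rw [mem_closedBall_zero_iff] at hb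
  calc dist (c + b) z ≤ dist (c + b) c + dist c z := dist_triangle _ _ _
    _ ≤ ρ + β := by rw [dist_self_add_left]; linarith

theorem sub_le_infDist_zero_closedBall {E : Type*} [SeminormedAddCommGroup E] {z : E} {r : ℝ}
    (hr : 0 ≤ r) :
    ‖z‖ - r ≤ infDist 0 (closedBall z r) :=
  (le_infDist (nonempty_closedBall.2 hr)).2 fun y hy => by
    rw [mem_closedBall] at hy
    linarith [dist_triangle (0 : E) y z, dist_zero_left z]

theorem exists_subset_closedBall_smul {C : Set X} {R δ ε a t : ℝ} (hC : Convex ℝ C)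
    (hCne : C.Nonempty) (ha : 0 < a) (haC : ∀ c ∈ C, a ≤ ‖c‖) (hR : 0 < R)
    (hCR : C ⊆ closedBall 0 R)
    (hslice : ∀ f : StrongDual ℝ X, ‖f‖ = 1 →
      ∃ x : X, ‖x‖ = 1 ∧ wslice x δ ⊆ ballOn ((fun y => R⁻¹ • y + 0) '' C) f ε) (ht : 0 ≤ t) :
    ∃ x : X, ‖x‖ = 1 ∧ C ⊆ closedBall (t • x) (max (t * (1 - δ) + R) (t - a + ε * R)) := by
  obtain ⟨f, hf, hfC⟩ := exists_norm_eq_one_forall_le_apply hC hCne ha haC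
  obtain ⟨x, hx, hxf⟩ := hslice f hf
  refine ⟨x, hx, fun c hc => ?_⟩
  have := norm_smul_sub_le_max hx ht (mem_closedBall_zero_iff.1 (hCR hc))
    fun g hg => abs_sub_apply_lt_of_wslice_subset_ballOn hR hCR hxf hg hc
  rw [mem_closedBall, dist_comm, dist_eq_norm]
  exact this.trans (max_le_max le_rfl (by linarith [hfC c hc]))

theorem stmt16_general (𝒞 : Set (Set X)) (h𝒞 : IsCompatibleClass 𝒞)
    (h : ∀ ε : ℝ, 0 < ε → ∃ δ : ℝ, 0 < δ ∧ ∀ C ∈ 𝒞, C ⊆ closedBall (0 : X) 1 →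
      ∀ f : StrongDual ℝ X, ‖f‖ = 1 →
        ∃ x : X, ‖x‖ = 1 ∧ wslice x δ ⊆ ballOn C f ε) :
    ∀ ε : ℝ, 0 < ε → ∀ β : ℝ, 0 ≤ β → ∀ M : ℝ, 2 ≤ M → ∀ η : ℝ, 0 < η → η < ε →
      ∃ K : ℝ, 0 < K ∧ ∀ C ∈ 𝒞, IsClosed C → Convex ℝ C → Metric.diam C ≤ M →
        ε ≤ Metric.infDist 0 (C + closedBall (0 : X) β) →
        ∃ z₀ : X, ∃ r : ℝ, 0 < r ∧ r ≤ K ∧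
          C + closedBall (0 : X) β ⊆ closedBall z₀ r ∧
          η < Metric.infDist 0 (closedBall z₀ r) := by
  intro ε hε β hβ M hM η hη hηε
  set R := η + M + β
  have hR : 0 < R := by linarith
  obtain ⟨δ, hδ, hslice⟩ := h ((ε - η) / (2 * R)) (div_pos (by linarith) (by linarith))
  set t := (R + ε + β) / min δ 1
  have htδ : t * min δ 1 = R + ε + β := div_mul_cancel₀ _ (lt_min hδ one_pos).ne'
  have ht : R + ε + β ≤ t := le_div_self (by linarith) (lt_min hδ one_pos) (min_le_right δ 1)
  refine ⟨max t (M + β), lt_max_of_lt_left (by linarith), fun C hC _ hCconv hCdiam hCdist => ?_⟩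
  suffices ∃ z ρ, C ⊆ closedBall z ρ ∧ 0 < ρ + β ∧ ρ + β ≤ max t (M + β) ∧ η < ‖z‖ - (ρ + β) by
    obtain ⟨z, ρ, hCz, hρ, hρK, hz⟩ := this
    exact ⟨z, ρ + β, hρ, hρK, add_closedBall_zero_subset_closedBall hCz,
      hz.trans_le (sub_le_infDist_zero_closedBall hρ.le)⟩
  by_cases hfar : ∃ c₀ ∈ C, R < ‖c₀‖
  · obtain ⟨c₀, hc₀, hRc₀⟩ := hfar
    refine ⟨c₀, M, fun c hc => (dist_le_diam_of_mem (h𝒞.bounded C hC) hc hc₀).trans hCdiam,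
      by linarith, le_max_right _ _, by linarith⟩
  push Not at hfar
  have hCR : C ⊆ closedBall 0 R := fun c hc => mem_closedBall_zero_iff.2 (hfar c hc)
  have hCne : C.Nonempty := nonempty_iff_ne_empty.2 fun hC0 => by
    simp only [hC0, empty_add, infDist_empty] at hCdist; linarith
  obtain ⟨x, hx, hCx⟩ := exists_subset_closedBall_smul (t := t) hCconv hCne (by linarith)
    (fun c hc => add_le_norm_of_le_infDist_add_closedBall hε hβ hCdist hc) hR hCR
    (hslice _ (h𝒞.smul_add_mem C hC R⁻¹ 0) (image_inv_smul_subset_closedBall_one hR hCR))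
    (by linarith)
  refine ⟨t • x, t - (ε + η) / 2 - β, hCx.trans (closedBall_subset_closedBall ?_), by linarith,
    le_max_of_le_left (by linarith), ?_⟩
  · have : (ε - η) / (2 * R) * R = (ε - η) / 2 := by field_simp
    refine max_le ?_ (by linarith)
    nlinarith [mul_le_mul_of_nonneg_left (min_le_left δ 1) (by linarith : 0 ≤ t)]
  · rw [norm_smul, hx, Real.norm_of_nonneg (by linarith), mul_one]
    linarith

theorem stmt16 [CompleteSpace X] (𝒞 : Set (Set X)) (h𝒞 : IsCompatibleClass 𝒞)
    (h : ∀ ε : ℝ, 0 < ε → ∃ δ : ℝ, 0 < δ ∧ ∀ C ∈ 𝒞, C ⊆ closedBall (0 : X) 1 →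
      ∀ f : StrongDual ℝ X, ‖f‖ = 1 →
        ∃ x : X, ‖x‖ = 1 ∧ wslice x δ ⊆ ballOn C f ε) :
    ∀ ε : ℝ, 0 < ε → ∀ β : ℝ, 0 ≤ β → ∀ M : ℝ, 2 ≤ M → ∀ η : ℝ, 0 < η → η < ε →
      ∃ K : ℝ, 0 < K ∧ ∀ C ∈ 𝒞, IsClosed C → Convex ℝ C → Metric.diam C ≤ M →
        ε ≤ Metric.infDist 0 (C + closedBall (0 : X) β) →
        ∃ z₀ : X, ∃ r : ℝ, 0 < r ∧ r ≤ K ∧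
          C + closedBall (0 : X) β ⊆ closedBall z₀ r ∧
          η < Metric.infDist 0 (closedBall z₀ r) :=
  stmt16_general 𝒞 h𝒞 h
end

section
/- Let X be a real Banach space and let 𝒞 be a compatible class of bounded subsets of X. The following are equivalent: (d) for every ε > 0 there exists δ > 0 such that for every C ∈ 𝒞 with C ⊆ B(X) and every f ∈ S(X*) there is x ∈ S(X) with S(B(X*), x, δ) ⊆ B_C(f, ε); (e) for every ε > 0 there exists δ > 0 such that for every C ∈ 𝒞 with C ⊆ B(X) and every f ∈ S(X*) there is x ∈ S(X) with D(S(X) ∩ B(x, δ)) ⊆ B_C(f, ε). -/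
/-!
(d) ⇒ (e) because `D(S(X) ∩ B(x, δ))` lies in the slice `S(B(X*), x, δ)`.

(e) ⇒ (d) by the Bishop–Phelps–Bollobás theorem: a functional in the thin slice
`S(B(X*), x, η²/2)` is `η`-close in norm to some `k ∈ D(y)` with `‖y − x‖ < η`, and on
`C ⊆ B(X)` the seminorm `‖·‖_C` is dominated by the norm. Bishop–Phelps–Bollobás follows from
Ekeland's variational principle applied to `z ↦ ‖z‖ − f z`: at the Ekeland point `y`, a
Hahn–Banach extension on `X × X` splits `f` into a functional norming `y` plus a small error.
-/


open Metric Set Pointwise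

variable {X : Type*} [NormedAddCommGroup X] [NormedSpace ℝ X]

theorem exists_mem_forall_le_add {ι : Type*} {F : ι → ℝ} {s : Set ι} (hs : s.Nonempty)
    (hbdd : BddBelow (F '' s)) {η : ℝ} (hη : 0 < η) : ∃ a ∈ s, ∀ w ∈ s, F a ≤ F w + η := by
  obtain ⟨_, ⟨a, ha, rfl⟩, hlt⟩ :=
    exists_lt_of_csInf_lt (hs.image F) (lt_add_of_pos_right (sInf (F '' s)) hη)
  exact ⟨a, ha, fun w hw => hlt.le.trans (by gcongr; exact csInf_le hbdd ⟨w, hw, rfl⟩)⟩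

section Ekeland

variable {E : Type*} [PseudoMetricSpace E] {F : E → ℝ} {α : ℝ}

-- `a ∈ descentSet F α b` is Ekeland's partial order `a ≼ b`.
def descentSet (F : E → ℝ) (α : ℝ) (b : E) : Set E :=
  {a | F a + α * dist a b ≤ F b}

theorem self_mem_descentSet (b : E) : b ∈ descentSet F α b := by
  simp [descentSet]

theorem descentSet_trans (hα : 0 ≤ α) {a b c : E} (hab : a ∈ descentSet F α b)
    (hbc : b ∈ descentSet F α c) : a ∈ descentSet F α c := by
  simp only [descentSet, mem_ofPred_eq] at *
  nlinarith [dist_triangle a b c]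

theorem isClosed_descentSet (hF : LowerSemicontinuous F) (b : E) :
    IsClosed (descentSet F α b) :=
  (hF.add (continuous_const.mul (continuous_id.dist continuous_const)).lowerSemicontinuous
    ).isClosed_preimage (F b)

theorem ekeland_variational_principle [CompleteSpace E] (hF : LowerSemicontinuous F)
    (hbdd : BddBelow (range F)) (hα : 0 < α) (x₀ : E) :
    ∃ y, F y + α * dist y x₀ ≤ F x₀ ∧ ∀ z, F y ≤ F z + α * dist z y := by
  have step (b : E) (n : ℕ) : ∃ a ∈ descentSet F α b,
      ∀ w ∈ descentSet F α b, F a ≤ F w + (1 / 2) ^ n :=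
    exists_mem_forall_le_add ⟨b, self_mem_descentSet b⟩ (hbdd.mono (image_subset_range F _))
      (by positivity)
  choose next next_mem next_le using step
  set x : ℕ → E := fun n => Nat.rec x₀ (fun n a => next a n) n
  have x_mem (n : ℕ) : ∀ m, n ≤ m → x m ∈ descentSet F α (x n) :=
    Nat.le_induction (self_mem_descentSet _) fun m _ ih =>
      descentSet_trans hα.le (next_mem (x m) m) ih
  -- Everything below `x (n + 1)` is almost as low as `x (n + 1)`, hence close to it.
  have near (n : ℕ) {z : E} (hz : z ∈ descentSet F α (x (n + 1))) :
      F (x (n + 1)) ≤ F z + (1 / 2) ^ n ∧ α * dist z (x (n + 1)) ≤ (1 / 2) ^ n := by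
    have hle : F (x (n + 1)) ≤ F z + (1 / 2) ^ n :=
      next_le _ _ z (descentSet_trans hα.le hz (x_mem n (n + 1) n.le_succ))
    exact ⟨hle, by simp only [descentSet, mem_ofPred_eq] at hz; linarith⟩
  have hcauchy : CauchySeq x := by
    refine Metric.cauchySeq_iff'.2 fun ε hε => ?_
    obtain ⟨n, hn⟩ := exists_pow_lt_of_lt_one (mul_pos hα hε) (by norm_num : (1 / 2 : ℝ) < 1)
    refine ⟨n + 1, fun m hm => ?_⟩
    have := (near n (x_mem (n + 1) m hm)).2
    by_contra! h
    nlinarith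
  obtain ⟨y, hy⟩ := cauchySeq_tendsto_of_complete hcauchy
  have y_mem (n : ℕ) : y ∈ descentSet F α (x n) :=
    (isClosed_descentSet hF _).mem_of_tendsto hy (Filter.eventually_atTop.2 ⟨n, x_mem n⟩)
  refine ⟨y, y_mem 0, fun z => ?_⟩
  by_cases hz : z ∈ descentSet F α y
  · have hFy (n : ℕ) : F y ≤ F z + (1 / 2) ^ n := by
      have hyn := y_mem (n + 1)
      simp only [descentSet, mem_ofPred_eq] at hyn
      nlinarith [(near n (descentSet_trans hα.le hz (y_mem (n + 1)))).1,
        dist_nonneg (x := y) (y := x (n + 1))]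
    have : F y ≤ F z := le_of_forall_pos_lt_add fun ε hε => by
      obtain ⟨n, hn⟩ := exists_pow_lt_of_lt_one hε (by norm_num : (1 / 2 : ℝ) < 1)
      linarith [hFy n]
    nlinarith [dist_nonneg (x := z) (y := y)]
  · simp only [descentSet, mem_ofPred_eq, not_le] at hz
    linarith

end Ekeland

theorem exists_dual_vector_near (y : X) (f : StrongDual ℝ X) {α : ℝ} (hα : 0 ≤ α)
    (h : ∀ (t : ℝ) (u : X), t * ‖y‖ + f u ≤ ‖t • y + u‖ + α * ‖u‖) :
    ∃ g : StrongDual ℝ X, ‖g‖ ≤ 1 ∧ g y = ‖y‖ ∧ ‖f - g‖ ≤ α := by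
  -- Hahn–Banach on `X × X`: `(t • y, u) ↦ t * ‖y‖ + f u` is dominated by `N`; the extension
  -- restricted to `X × 0` is `g`, and `f - g` is the extension on the antidiagonal.
  have hspan (c : ℝ) (hc : c • y = 0) : c • ‖y‖ = 0 := by
    rcases smul_eq_zero.1 hc with rfl | rfl <;> simp
  let φ : X × X →ₗ.[ℝ] ℝ :=
    (LinearPMap.mkSpanSingleton' y ‖y‖ hspan).coprod ((f : X →ₗ[ℝ] ℝ).toPMap ⊤)
  let N : X × X → ℝ := fun p => ‖p.1 + p.2‖ + α * ‖p.2‖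
  have hφ (t : ℝ) (u : X) (hp : ((t • y, u) : X × X) ∈ φ.domain) :
      φ ⟨(t • y, u), hp⟩ = t * ‖y‖ + f u := by
    simp only [φ, LinearPMap.coprod_apply]
    rw [LinearPMap.mkSpanSingleton'_apply, smul_eq_mul]
    rfl
  obtain ⟨G, hGφ, hGN⟩ := exists_extension_of_le_sublinear φ N
    (fun c hc p => by
      simp only [N, Prod.smul_fst, Prod.smul_snd, ← smul_add, norm_smul, Real.norm_of_nonneg hc.le]
      ring)
    (fun p q => by
      simp only [N, Prod.fst_add, Prod.snd_add]
      rw [add_add_add_comm]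
      linarith [norm_add_le (p.1 + p.2) (q.1 + q.2),
        mul_le_mul_of_nonneg_left (norm_add_le p.2 q.2) hα])
    (by
      rintro ⟨⟨a, u⟩, hp⟩
      obtain ⟨t, rfl⟩ := Submodule.mem_span_singleton.1 hp.1
      rw [hφ t u hp]
      exact h t u)
  have hG (t : ℝ) (u : X) : G (t • y, u) = t * ‖y‖ + f u := by
    have hp : ((t • y, u) : X × X) ∈ φ.domain :=
      ⟨Submodule.mem_span_singleton.2 ⟨t, rfl⟩, Submodule.mem_top⟩
    rw [← hφ t u hp]
    exact hGφ ⟨_, hp⟩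
  have habs (p : X × X) : |G p| ≤ N p := by
    have := hGN (-p)
    simp only [N, map_neg, Prod.fst_neg, Prod.snd_neg, ← neg_add, norm_neg] at this
    exact abs_le.2 ⟨by linarith, hGN p⟩
  let g : StrongDual ℝ X := (G.comp (LinearMap.inl ℝ X X)).mkContinuous 1 fun u => by
    simpa [N] using habs (u, 0)
  have hg (u : X) : g u = G (u, 0) := rfl
  refine ⟨g, LinearMap.mkContinuous_norm_le _ zero_le_one _, ?_, ?_⟩
  · rw [hg]
    simpa using hG 1 0
  · refine ContinuousLinearMap.opNorm_le_bound _ hα fun u => ?_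
    have hfg : (f - g) u = G (-u, u) := by
      have : ((-u, u) : X × X) = ((0 : ℝ) • y, u) - (u, 0) := by simp
      rw [this, map_sub, hG, sub_apply, hg]
      ring
    simpa [hfg, N] using habs (-u, u)

theorem norm_inv_norm_smul_sub_le {x₀ : X} (hx₀ : ‖x₀‖ = 1) (y : X) :
    ‖‖y‖⁻¹ • y - x₀‖ ≤ 2 * ‖y - x₀‖ := by
  rcases eq_or_ne y 0 with rfl | hy
  · simp [hx₀]
  have hy' : 0 < ‖y‖ := norm_pos_iff.2 hy
  have hnormalize : ‖‖y‖⁻¹ • y - y‖ = |‖x₀‖ - ‖y‖| := by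
    rw [show ‖y‖⁻¹ • y - y = (‖y‖⁻¹ - 1) • y by rw [sub_smul, one_smul], norm_smul,
      Real.norm_eq_abs, ← abs_of_pos hy', ← abs_mul, abs_of_pos hy', sub_mul,
      inv_mul_cancel₀ hy'.ne', hx₀, one_mul, abs_sub_comm]
  calc ‖‖y‖⁻¹ • y - x₀‖ ≤ ‖‖y‖⁻¹ • y - y‖ + ‖y - x₀‖ := norm_sub_le_norm_sub_add_norm_sub _ _ _
    _ ≤ ‖x₀ - y‖ + ‖y - x₀‖ := by rw [hnormalize]; gcongr; exact abs_norm_sub_norm_le _ _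
    _ = 2 * ‖y - x₀‖ := by rw [norm_sub_rev]; ring

theorem le_norm_smul_add_of_forall_le {f : StrongDual ℝ X} (hf : ‖f‖ ≤ 1) {y : X} {β : ℝ}
    (hβ : 0 ≤ β) (hmin : ∀ w, ‖y‖ - f y ≤ ‖w‖ - f w + β * ‖w - y‖) (t : ℝ) (u : X) :
    t * ‖y‖ + f u ≤ ‖t • y + u‖ + β * ‖u‖ := by
  rcases le_or_gt t 0 with ht | ht
  · have hfu : f u ≤ ‖u‖ := (le_abs_self _).trans (by simpa using f.le_of_opNorm_le hf u)
    have hu : ‖u‖ ≤ ‖t • y + u‖ + -t * ‖y‖ := by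
      simpa [norm_smul, abs_of_nonpos ht] using norm_sub_le (t • y + u) (t • y)
    nlinarith [norm_nonneg u]
  · set w := y + t⁻¹ • u
    have hu : u = t • (w - y) := by simp [w, smul_smul, ht.ne']
    have hty : t • y + u = t • w := by rw [hu, smul_sub]; abel
    rw [hty, hu, map_smul, map_sub, norm_smul, norm_smul, Real.norm_of_nonneg ht.le, smul_eq_mul]
    nlinarith [mul_le_mul_of_nonneg_left (hmin w) ht.le]

theorem bishop_phelps_bollobas [CompleteSpace X] {ε : ℝ} (hε : 0 < ε) (hε2 : ε < 2)
    {f : StrongDual ℝ X} (hf : ‖f‖ ≤ 1) {x₀ : X} (hx₀ : ‖x₀‖ = 1)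
    (hfx : 1 - ε ^ 2 / 2 < f x₀) :
    ∃ y, ‖y‖ = 1 ∧ ‖y - x₀‖ < ε ∧ ∃ g ∈ dualD y, ‖f - g‖ ≤ ε := by
  have hF0 (z : X) : 0 ≤ ‖z‖ - f z :=
    sub_nonneg.2 <| (le_abs_self _).trans (by simpa using f.le_of_opNorm_le hf z)
  obtain ⟨y₁, hy₁x₀, hmin⟩ := ekeland_variational_principle
    (continuous_norm.sub f.continuous).lowerSemicontinuous ⟨0, forall_mem_range.2 hF0⟩ hε x₀
  simp only [dist_eq_norm, Pi.sub_apply] at hy₁x₀ hmin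
  have hdist : ‖y₁ - x₀‖ < ε / 2 := by
    refine lt_of_mul_lt_mul_left ?_ hε.le
    nlinarith [hF0 y₁]
  have hy₁ : 0 < ‖y₁‖ := by
    linarith [norm_sub_norm_le x₀ y₁, norm_sub_rev x₀ y₁]
  obtain ⟨g, hg, hgy₁, hfg⟩ :=
    exists_dual_vector_near y₁ f hε.le (le_norm_smul_add_of_forall_le hf hε.le hmin)
  have hgy : g (‖y₁‖⁻¹ • y₁) = 1 := by
    rw [map_smul, hgy₁, smul_eq_mul, inv_mul_cancel₀ hy₁.ne']
  have hnorm : ‖‖y₁‖⁻¹ • y₁‖ = 1 := norm_smul_inv_norm (norm_pos_iff.1 hy₁)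
  refine ⟨_, hnorm, by linarith [norm_inv_norm_smul_sub_le hx₀ y₁], g, ⟨?_, hgy⟩, hfg⟩
  refine le_antisymm hg ?_
  simpa [hgy, hnorm] using g.le_opNorm (‖y₁‖⁻¹ • y₁)

theorem dualDSet_subset_wslice {E : Set X} {x : X} {δ : ℝ} (hE : E ⊆ ball x δ) :
    dualDSet E ⊆ wslice x δ := by
  intro g hg
  simp only [dualDSet, dualD, mem_iUnion₂, mem_ofPred_eq] at hg
  obtain ⟨y, hy, hg1, hgy⟩ := hg
  have hyx : g (y - x) ≤ ‖y - x‖ :=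
    (le_abs_self _).trans (by simpa [hg1] using g.le_opNorm (y - x))
  have : ‖y - x‖ < δ := by simpa [dist_eq_norm] using hE hy
  refine ⟨hg1.le, ?_⟩
  rw [map_sub, hgy] at hyx
  linarith

theorem bddAbove_abs_apply {A : Set X} (hA : Bornology.IsBounded A) (f : StrongDual ℝ X) :
    BddAbove ((fun x => |f x|) '' A) := by
  obtain ⟨R, hR⟩ := hA.subset_closedBall 0
  refine ⟨‖f‖ * R, forall_mem_image.2 fun x hx => ?_⟩
  have hx : ‖x‖ ≤ R := by simpa using hR hx
  exact (f.le_opNorm x).trans (by gcongr)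

theorem semiNormOn_nonneg (A : Set X) (f : StrongDual ℝ X) : 0 ≤ semiNormOn A f :=
  Real.sSup_nonneg <| forall_mem_image.2 fun _ _ => abs_nonneg _

theorem semiNormOn_add_le {A : Set X} (hA : Bornology.IsBounded A) (f g : StrongDual ℝ X) :
    semiNormOn A (f + g) ≤ semiNormOn A f + semiNormOn A g := by
  refine Real.sSup_le (forall_mem_image.2 fun x hx => ?_)
    (add_nonneg (semiNormOn_nonneg A f) (semiNormOn_nonneg A g))
  calc |(f + g) x| ≤ |f x| + |g x| := abs_add_le _ _
    _ ≤ semiNormOn A f + semiNormOn A g :=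
      add_le_add (le_csSup (bddAbove_abs_apply hA f) (mem_image_of_mem _ hx))
        (le_csSup (bddAbove_abs_apply hA g) (mem_image_of_mem _ hx))

theorem semiNormOn_le_norm {A : Set X} (hA : A ⊆ closedBall 0 1) (f : StrongDual ℝ X) :
    semiNormOn A f ≤ ‖f‖ := by
  refine Real.sSup_le (forall_mem_image.2 fun x hx => ?_) (norm_nonneg f)
  have hx : ‖x‖ ≤ 1 := by simpa using hA hx
  simpa using f.le_of_opNorm_le_of_le le_rfl hx

theorem ballOn_subset_ballOn {A : Set X} {f : StrongDual ℝ X} {r s : ℝ} (h : r ≤ s) :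
    ballOn A f r ⊆ ballOn A f s :=
  fun _ hg => lt_of_lt_of_le hg h

theorem mem_ballOn_of_norm_sub_le {A : Set X} (hA : A ⊆ closedBall 0 1)
    {f g k : StrongDual ℝ X} {r s : ℝ} (hk : k ∈ ballOn A f r) (hgk : ‖g - k‖ ≤ s) :
    g ∈ ballOn A f (r + s) :=
  calc semiNormOn A (f - g) = semiNormOn A ((f - k) + (k - g)) := by rw [sub_add_sub_cancel]
    _ ≤ semiNormOn A (f - k) + semiNormOn A (k - g) :=
      semiNormOn_add_le (isBounded_closedBall.subset hA) _ _
    _ < r + s := add_lt_add_of_lt_of_le hk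
      ((semiNormOn_le_norm hA _).trans ((norm_sub_rev k g).trans_le hgk))

theorem stmt18_general [CompleteSpace X] (𝒞 : Set (Set X)) :
    (∀ ε : ℝ, 0 < ε → ∃ δ : ℝ, 0 < δ ∧ ∀ C ∈ 𝒞, C ⊆ closedBall (0 : X) 1 →
      ∀ f : StrongDual ℝ X, ‖f‖ = 1 →
        ∃ x : X, ‖x‖ = 1 ∧ wslice x δ ⊆ ballOn C f ε) ↔
    (∀ ε : ℝ, 0 < ε → ∃ δ : ℝ, 0 < δ ∧ ∀ C ∈ 𝒞, C ⊆ closedBall (0 : X) 1 →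
      ∀ f : StrongDual ℝ X, ‖f‖ = 1 →
        ∃ x : X, ‖x‖ = 1 ∧
          dualDSet ({y | ‖y‖ = 1} ∩ ball x δ) ⊆ ballOn C f ε) := by
  constructor
  · intro hd ε hε
    obtain ⟨δ, hδ, hd⟩ := hd ε hε
    refine ⟨δ, hδ, fun C hC hC1 f hf => ?_⟩
    obtain ⟨x, hx, hslice⟩ := hd C hC hC1 f hf
    exact ⟨x, hx, (dualDSet_subset_wslice inter_subset_right).trans hslice⟩
  · intro he ε hε
    obtain ⟨δ₀, hδ₀, he⟩ := he (ε / 2) (half_pos hε)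
    obtain ⟨η, hη, hη2, hηδ₀, hηε⟩ : ∃ η : ℝ, 0 < η ∧ η < 2 ∧ η ≤ δ₀ ∧ η ≤ ε / 2 :=
      ⟨min 1 (min δ₀ (ε / 2)), lt_min one_pos (lt_min hδ₀ (half_pos hε)),
        (min_le_left _ _).trans_lt one_lt_two, (min_le_right _ _).trans (min_le_left _ _),
        (min_le_right _ _).trans (min_le_right _ _)⟩
    refine ⟨η ^ 2 / 2, by positivity, fun C hC hC1 f hf => ?_⟩
    obtain ⟨x, hx, hD⟩ := he C hC hC1 f hf
    refine ⟨x, hx, fun g ⟨hg, hgx⟩ => ?_⟩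
    obtain ⟨y, hy, hyx, k, hk, hgk⟩ := bishop_phelps_bollobas hη hη2 hg hx hgx
    have hyδ₀ : y ∈ ball x δ₀ := by
      rw [mem_ball, dist_eq_norm]
      linarith
    have hkC : k ∈ ballOn C f (ε / 2) := hD (mem_biUnion ⟨hy, hyδ₀⟩ hk)
    exact ballOn_subset_ballOn (by linarith) (mem_ballOn_of_norm_sub_le hC1 hkC hgk)

theorem stmt18 [CompleteSpace X] (𝒞 : Set (Set X)) (h𝒞 : IsCompatibleClass 𝒞) :
    (∀ ε : ℝ, 0 < ε → ∃ δ : ℝ, 0 < δ ∧ ∀ C ∈ 𝒞, C ⊆ closedBall (0 : X) 1 →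
      ∀ f : StrongDual ℝ X, ‖f‖ = 1 →
        ∃ x : X, ‖x‖ = 1 ∧ wslice x δ ⊆ ballOn C f ε) ↔
    (∀ ε : ℝ, 0 < ε → ∃ δ : ℝ, 0 < δ ∧ ∀ C ∈ 𝒞, C ⊆ closedBall (0 : X) 1 →
      ∀ f : StrongDual ℝ X, ‖f‖ = 1 →
        ∃ x : X, ‖x‖ = 1 ∧
          dualDSet ({y | ‖y‖ = 1} ∩ ball x δ) ⊆ ballOn C f ε) :=
  stmt18_general 𝒞
end
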